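/- arXiv:2305.04701 — 6 statements merged into one kernel-verified Lean document; each statement's English description precedes it below -/
import Mathlib

section
/- Let ε ∈ (0, 0.1) and r > 0, and let A, B ∈ ℝ^{n×n} be symmetric positive semidefinite matrices. Assume that -r ≤ A_{i,j} ≤ r for all (i,j) ∈ [n]×[n], and that (1-ε)B ⪯ A ⪯ (1+ε)B in the Loewner order (i.e. A - (1-ε)B and (1+ε)B - A are positive semidefinite). Then every entry of B satisfies B_{i,j} ∈ [-(1+2ε)r, (1+2ε)r]. -/
/-!
For a positive semidefinite `B`, testing the quadratic form on `eᵢ ± eⱼ` gives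
`2 |B i j| ≤ B i i + B j j`, and the lower Loewner bound `(1 - ε) B ⪯ A` bounds the diagonal:
`(1 - ε) B i i ≤ A i i ≤ r`. Hence `(1 - ε) |B i j| ≤ r`, and `1 ≤ (1 + 2ε)(1 - ε)` for
`0 ≤ ε ≤ 1/2` turns this into `|B i j| ≤ (1 + 2ε) r`.
-/

namespace Matrix.PosSemidef

variable {ι : Type*} [Fintype ι] [DecidableEq ι]

lemma apply_add_two_mul_apply_add_sq_mul_apply_nonneg {M : Matrix ι ι ℝ} (hM : M.PosSemidef)
    (i j : ι) (c : ℝ) : 0 ≤ M i i + 2 * c * M i j + c ^ 2 * M j j := by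
  have hsymm : M j i = M i j := hM.isHermitian.apply i j
  have h := hM.dotProduct_mulVec_nonneg (Pi.single i 1 + Pi.single j c)
  simp only [star_trivial, mulVec_add, mulVec_single, dotProduct_add, add_dotProduct,
    single_dotProduct, Pi.smul_apply, op_smul_eq_mul, col_apply, hsymm] at h
  linarith

lemma two_mul_abs_apply_le {M : Matrix ι ι ℝ} (hM : M.PosSemidef) (i j : ι) :
    2 * |M i j| ≤ M i i + M j j := by
  have hplus := hM.apply_add_two_mul_apply_add_sq_mul_apply_nonneg i j 1
  have hminus := hM.apply_add_two_mul_apply_add_sq_mul_apply_nonneg i j (-1)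
  rcases abs_cases (M i j) with ⟨habs, -⟩ | ⟨habs, -⟩ <;> rw [habs] <;> linarith

end Matrix.PosSemidef

lemma mul_apply_le_of_posSemidef_sub_smul {ι : Type*} {A B : Matrix ι ι ℝ} {c : ℝ}
    (h : (A - c • B).PosSemidef) (i : ι) : c * B i i ≤ A i i := by
  have := h.diag_nonneg (i := i)
  rw [Matrix.sub_apply, Matrix.smul_apply, smul_eq_mul] at this
  linarith

lemma abs_le_one_add_two_mul_mul_of_one_sub_mul_abs_le {ε x r : ℝ} (hε₀ : 0 ≤ ε) (hε : ε ≤ 1 / 2)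
    (h : (1 - ε) * |x| ≤ r) : |x| ≤ (1 + 2 * ε) * r := by
  calc |x| ≤ (1 + 2 * ε) * ((1 - ε) * |x|) := by
        nlinarith [mul_nonneg (mul_nonneg hε₀ (by linarith : 0 ≤ 1 - 2 * ε)) (abs_nonneg x)]
    _ ≤ (1 + 2 * ε) * r := by gcongr

theorem entries_of_loewner_perturbed_psd_general {n : ℕ} (ε r : ℝ)
    (hε : ε ∈ Set.Ioo (0 : ℝ) 0.1)
    (A B : Matrix (Fin n) (Fin n) ℝ)
    (hB : B.PosSemidef)
    (hAr : ∀ i j, -r ≤ A i j ∧ A i j ≤ r)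
    (hlow : (A - (1 - ε) • B).PosSemidef) :
    ∀ i j, -((1 + 2 * ε) * r) ≤ B i j ∧ B i j ≤ (1 + 2 * ε) * r := by
  obtain ⟨hε₀, hε₁⟩ := hε
  intro i j
  have hdiag (k : Fin n) : (1 - ε) * B k k ≤ r :=
    (mul_apply_le_of_posSemidef_sub_smul hlow k).trans (hAr k k).2
  have hoff : (1 - ε) * |B i j| ≤ r := by
    have := mul_le_mul_of_nonneg_left (hB.two_mul_abs_apply_le i j) (by linarith : 0 ≤ 1 - ε)
    linarith [hdiag i, hdiag j]
  exact abs_le.mp (abs_le_one_add_two_mul_mul_of_one_sub_mul_abs_le hε₀.le (by linarith) hoff)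

theorem entries_of_loewner_perturbed_psd {n : ℕ} (ε r : ℝ)
    (hε : ε ∈ Set.Ioo (0 : ℝ) 0.1) (hr : 0 < r)
    (A B : Matrix (Fin n) (Fin n) ℝ)
    (hA : A.PosSemidef) (hB : B.PosSemidef)
    (hAr : ∀ i j, -r ≤ A i j ∧ A i j ≤ r)
    (hlow : (A - (1 - ε) • B).PosSemidef)
    (hupp : ((1 + ε) • B - A).PosSemidef) :
    ∀ i j, -((1 + 2 * ε) * r) ≤ B i j ∧ B i j ≤ (1 + 2 * ε) * r :=
  entries_of_loewner_perturbed_psd_general ε r hε A B hB hAr hlow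
end

section
/- Let f : ℝ → ℝ be either f(z) = exp(z) or f(z) = cosh(z), let A, B ∈ ℝ^{n×n}, let c₁ > 0, c₂ > 0, r > 0, and define D(A) = diag(f(A)·1_n) and D(B) = diag(f(B)·1_n), applying f entrywise. Assume that for all i ∈ [n], |D(A)_{i,i} - D(B)_{i,i}| ≤ c₁ r · min{D(A)_{i,i}, D(B)_{i,i}}, and that for all (i,j) ∈ [n]×[n], |f(A_{i,j}) - f(B_{i,j})| ≤ c₂ r · min{f(A_{i,j}), f(B_{i,j})}. Then ‖D(A)^{-1} f(A) - D(B)^{-1} f(B)‖_∞ ≤ (c₁ + c₂) · r, where ‖M‖_∞ denotes the maximum absolute value of the entries of M. -/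
open Matrix

/-- The diagonal normalization matrix `D(M) = diag(f(M) 1_n)`. -/
noncomputable def attnDiag {n : ℕ} (f : ℝ → ℝ) (M : Matrix (Fin n) (Fin n) ℝ) :
    Matrix (Fin n) (Fin n) ℝ :=
  Matrix.diagonal (fun i => ∑ j, f (M i j))

/-- The `ℓ∞`-norm of a matrix: the maximum absolute value of its entries. -/
noncomputable def entryInfNorm {n : ℕ} (M : Matrix (Fin n) (Fin n) ℝ) : ℝ :=
  ⨆ i, ⨆ j, |M i j|

theorem attention_matrix_error {n : ℕ}
    (f : ℝ → ℝ) (hf : f = Real.exp ∨ f = Real.cosh)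
    (A B : Matrix (Fin n) (Fin n) ℝ) (c₁ c₂ r : ℝ)
    (hc₁ : 0 < c₁) (hc₂ : 0 < c₂) (hr : 0 < r)
    (hD : ∀ i, |attnDiag f A i i - attnDiag f B i i| ≤
        c₁ * r * min (attnDiag f A i i) (attnDiag f B i i))
    (hf' : ∀ i j, |f (A i j) - f (B i j)| ≤ c₂ * r * min (f (A i j)) (f (B i j))) :
    entryInfNorm ((attnDiag f A)⁻¹ * A.map f - (attnDiag f B)⁻¹ * B.map f) ≤
      (c₁ + c₂) * r := by
  have hfpos : ∀ x, 0 < f x := by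
    rcases hf with h | h <;> subst h <;> intro x
    · exact Real.exp_pos x
    · exact Real.cosh_pos x
  have hrhs : (0:ℝ) ≤ (c₁ + c₂) * r := by positivity
  rcases Nat.eq_zero_or_pos n with hn | hn
  · subst hn
    have : IsEmpty (Fin 0) := inferInstance
    simp [entryInfNorm, Real.iSup_of_isEmpty, hrhs]
  · have hne : Nonempty (Fin n) := ⟨⟨0, hn⟩⟩
    set dA : Fin n → ℝ := fun i => ∑ j, f (A i j) with hdAdef
    set dB : Fin n → ℝ := fun i => ∑ j, f (B i j) with hdBdef
    have hdA : ∀ i, 0 < dA i := fun i =>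
      Finset.sum_pos (fun j _ => hfpos _) Finset.univ_nonempty
    have hdB : ∀ i, 0 < dB i := fun i =>
      Finset.sum_pos (fun j _ => hfpos _) Finset.univ_nonempty
    have hinvA : (attnDiag f A)⁻¹ = Matrix.diagonal (fun i => (dA i)⁻¹) := by
      apply Matrix.inv_eq_left_inv
      rw [attnDiag, Matrix.diagonal_mul_diagonal]
      convert Matrix.diagonal_one using 2
      funext i
      exact inv_mul_cancel₀ (hdA i).ne'
    have hinvB : (attnDiag f B)⁻¹ = Matrix.diagonal (fun i => (dB i)⁻¹) := by
      apply Matrix.inv_eq_left_inv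
      rw [attnDiag, Matrix.diagonal_mul_diagonal]
      convert Matrix.diagonal_one using 2
      funext i
      exact inv_mul_cancel₀ (hdB i).ne'
    rw [entryInfNorm, hinvA, hinvB]
    apply Real.iSup_le _ hrhs
    intro i
    apply Real.iSup_le _ hrhs
    intro j
    simp only [Matrix.sub_apply, Matrix.diagonal_mul, Matrix.map_apply]
    set a := f (A i j) with ha'
    set b := f (B i j) with hb'
    have ha : 0 < a := hfpos _
    have hb : 0 < b := hfpos _
    have haA : a ≤ dA i := Finset.single_le_sum (fun k _ => (hfpos (A i k)).le)
      (Finset.mem_univ j)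
    have hbB : b ≤ dB i := Finset.single_le_sum (fun k _ => (hfpos (B i k)).le)
      (Finset.mem_univ j)
    have hDi : |dA i - dB i| ≤ c₁ * r * min (dA i) (dB i) := by
      have := hD i
      simpa [attnDiag, Matrix.diagonal_apply_eq] using this
    have hab : |a - b| ≤ c₂ * r * min a b := hf' i j
    have hdAi := hdA i
    have hdBi := hdB i
    have h1 : (dA i)⁻¹ * a - (dB i)⁻¹ * b =
        (a - b) / dA i + b * (dB i - dA i) / (dA i * dB i) := by
      field_simp
      ring
    rw [h1]
    have t1 : (a - b) / dA i ≤ c₂ * r ∧ -(c₂ * r) ≤ (a - b) / dA i := by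
      have hle : |a - b| ≤ c₂ * r * dA i := by
        refine hab.trans ?_
        have h : min a b ≤ dA i := (min_le_left a b).trans haA
        gcongr
      rw [abs_le] at hle
      constructor
      · rw [div_le_iff₀ hdAi]; linarith [hle.2]
      · rw [le_div_iff₀ hdAi]; nlinarith [hle.1]
    have t2 : b * (dB i - dA i) / (dA i * dB i) ≤ c₁ * r ∧
        -(c₁ * r) ≤ b * (dB i - dA i) / (dA i * dB i) := by
      have hle : |dA i - dB i| ≤ c₁ * r * dA i := by
        refine hDi.trans ?_
        have h : min (dA i) (dB i) ≤ dA i := min_le_left _ _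
        gcongr
      rw [abs_le] at hle
      have hpos : 0 < dA i * dB i := mul_pos hdAi hdBi
      constructor
      · rw [div_le_iff₀ hpos]; nlinarith [hle.2, hbB, hb.le]
      · rw [le_div_iff₀ hpos]; nlinarith [hle.1, hbB, hb.le]
    calc |(a - b) / dA i + b * (dB i - dA i) / (dA i * dB i)|
        ≤ |(a - b) / dA i| + |b * (dB i - dA i) / (dA i * dB i)| := abs_add_le _ _
      _ ≤ c₂ * r + c₁ * r := by
          gcongr <;> rw [abs_le] <;> constructor
          · exact t1.2
          · exact t1.1
          · exact t2.2
          · exact t2.1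
      _ = (c₁ + c₂) * r := by ring
end

section
/- Let k ∈ ℕ, ε ∈ (0,1), Δ > 0, and let λ₁, …, λ_n be strictly positive real numbers satisfying Σ_{j=1}^n (λ_j - 1)² ≤ Δ² and Σ_{j=1}^n (1 - 1/λ_j)² ≤ Δ², and assume k Δ² ≤ ε. Then (k/2) · Σ_{j=1}^n ( λ_j - 1 - log(λ_j) ) ≤ ε/2. -/
/-!
Since `log x ≥ 1 - 1/x`, each term satisfies `x - 1 - log x ≤ (x - 1) - (1 - 1/x) = (x - 1)(1 - 1/x)`,
and by AM-GM this is at most half the sum of the two squares `(x - 1)²` and `(1 - 1/x)²`.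
Summing, `Σ_j (λ_j - 1 - log λ_j) ≤ Δ²`, so the expectation is at most `k Δ² / 2 ≤ ε / 2`.
-/

open Finset Real

lemma Real.sub_one_sub_log_le_mul_one_sub_inv {x : ℝ} (hx : 0 < x) :
    x - 1 - log x ≤ (x - 1) * (1 - 1 / x) := by
  have hlog : 1 - x⁻¹ ≤ log x := one_sub_inv_le_log_of_pos hx
  have hprod : (x - 1) * (1 - 1 / x) = x - 1 - (1 - x⁻¹) := by field_simp
  linarith

lemma Real.sub_one_sub_log_le_half_sq_add_sq {x : ℝ} (hx : 0 < x) :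
    x - 1 - log x ≤ ((x - 1) ^ 2 + (1 - 1 / x) ^ 2) / 2 := by
  have := two_mul_le_add_sq (x - 1) (1 - 1 / x)
  linarith [sub_one_sub_log_le_mul_one_sub_inv hx]

lemma Real.sum_sub_one_sub_log_le {ι : Type*} [Fintype ι] {lam : ι → ℝ} {Δ : ℝ}
    (hlam : ∀ j, 0 < lam j) (h1 : ∑ j, (lam j - 1) ^ 2 ≤ Δ ^ 2)
    (h2 : ∑ j, (1 - 1 / lam j) ^ 2 ≤ Δ ^ 2) :
    ∑ j, (lam j - 1 - log (lam j)) ≤ Δ ^ 2 :=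
  calc ∑ j, (lam j - 1 - log (lam j))
      ≤ ∑ j, ((lam j - 1) ^ 2 + (1 - 1 / lam j) ^ 2) / 2 :=
        sum_le_sum fun j _ => sub_one_sub_log_le_half_sq_add_sq (hlam j)
    _ = (∑ j, (lam j - 1) ^ 2 + ∑ j, (1 - 1 / lam j) ^ 2) / 2 := by
        rw [← sum_add_distrib, sum_div]
    _ ≤ Δ ^ 2 := by linarith

theorem expected_privacy_loss_bound_general (k : ℕ) (n : ℕ) (ε Δ : ℝ)
    (lam : Fin n → ℝ) (hlampos : ∀ j, 0 < lam j)
    (h1 : ∑ j, (lam j - 1) ^ 2 ≤ Δ ^ 2)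
    (h2 : ∑ j, (1 - 1 / lam j) ^ 2 ≤ Δ ^ 2)
    (hkΔ : (k : ℝ) * Δ ^ 2 ≤ ε) :
    ((k : ℝ) / 2) * ∑ j, (lam j - 1 - Real.log (lam j)) ≤ ε / 2 :=
  calc ((k : ℝ) / 2) * ∑ j, (lam j - 1 - Real.log (lam j))
      ≤ ((k : ℝ) / 2) * Δ ^ 2 :=
        mul_le_mul_of_nonneg_left (sum_sub_one_sub_log_le hlampos h1 h2) (by positivity)
    _ ≤ ε / 2 := by linarith

theorem expected_privacy_loss_bound (k : ℕ) (n : ℕ) (ε Δ : ℝ)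
    (hε : ε ∈ Set.Ioo (0 : ℝ) 1) (hΔ : 0 < Δ)
    (lam : Fin n → ℝ) (hlampos : ∀ j, 0 < lam j)
    (h1 : ∑ j, (lam j - 1) ^ 2 ≤ Δ ^ 2)
    (h2 : ∑ j, (1 - 1 / lam j) ^ 2 ≤ Δ ^ 2)
    (hkΔ : (k : ℝ) * Δ ^ 2 ≤ ε) :
    ((k : ℝ) / 2) * ∑ j, (lam j - 1 - Real.log (lam j)) ≤ ε / 2 :=
  expected_privacy_loss_bound_general k n ε Δ lam hlampos h1 h2 hkΔ
end

section
/- Let k ∈ ℕ with k ≥ 1, n ≥ 1, ε ∈ (0,1), δ ∈ (0,1), and define Δ := min{ ε / √(8 k log(1/δ)), ε / (8 log(1/δ)) }; assume Δ < 1 and k Δ² ≤ ε. Let λ₁, …, λ_n be strictly positive reals with Σ_{j=1}^n (λ_j - 1)² ≤ Δ² and Σ_{j=1}^n (1 - 1/λ_j)² ≤ Δ². Let (h_{i,j})_{i∈[k], j∈[n]} be independent standard Gaussian random variables, and define the random variable Z := ½ Σ_{i=1}^k Σ_{j=1}^n ( (λ_j - 1) h_{i,j}² - log(λ_j) ). Then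 P[Z > ε] ≤ δ. -/
/-!
Chernoff bound. The privacy loss is a sum of `k n` independent terms `((λ - 1) h² - log λ) / 2`,
whose moment generating function is exactly `(1 - t (λ - 1))^(-1/2) λ^(-t/2)`. Since
`-log (1 - u) ≤ u + u²` for `|u| ≤ 1/2`, and `∑ (λ - 1 - log λ) ≤ ∑ (λ - 1)(1 - 1/λ) ≤ Δ²` by
Cauchy–Schwarz, `log 𝔼 exp (t Z) ≤ k Δ² (t + t²) / 2`. Take `t = 4 log (1/δ) / ε`: then
`Δ ≤ ε / (8 log (1/δ))` keeps `|t (λ - 1)| ≤ 1/2`, while `Δ ≤ ε / √(8 k log (1/δ))` and `k Δ² ≤ ε`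
bound the exponent `-t ε + k Δ² (t + t²) / 2` by `-log (1/δ)`.
-/

open MeasureTheory ProbabilityTheory Real Finset
open scoped NNReal

theorem mgf_sq_gaussianReal {v : ℝ≥0} (hv : v ≠ 0) {c : ℝ} (hc : 2 * c * v < 1) :
    mgf (fun x => x ^ 2) (gaussianReal 0 v) c = (√(1 - 2 * c * v))⁻¹ := by
  have hv0 : (0 : ℝ) < v := by positivity
  have hb : 0 < 1 / (2 * v) - c := by
    rw [sub_pos, lt_div_iff₀ (by positivity)]; linarith
  calc mgf (fun x => x ^ 2) (gaussianReal 0 v) c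
      = ∫ x, (√(2 * π * v))⁻¹ * exp (-(1 / (2 * v) - c) * x ^ 2) := by
        rw [mgf, integral_gaussianReal_eq_integral_smul hv]
        congr 1 with x
        rw [gaussianPDFReal, smul_eq_mul, mul_assoc, ← exp_add]
        ring_nf
    _ = (√(2 * π * v))⁻¹ * √(π / (1 / (2 * v) - c)) := by
        rw [integral_const_mul, integral_gaussian]
    _ = (√(1 - 2 * c * v))⁻¹ := by
        rw [← sqrt_inv, ← sqrt_inv, ← sqrt_mul (by positivity)]
        congr 1
        field_simp

theorem mgf_half_mul_sq_sub_gaussianReal {b c t : ℝ} (ht : t * b < 1) :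
    mgf (fun x => 1 / 2 * (b * x ^ 2 - c)) (gaussianReal 0 1) t
      = (√(1 - t * b))⁻¹ * exp (-(t / 2 * c)) := by
  have hsq := mgf_sq_gaussianReal one_ne_zero (c := t * b / 2) (by push_cast; linarith)
  calc mgf (fun x => 1 / 2 * (b * x ^ 2 - c)) (gaussianReal 0 1) t
      = mgf (fun x => x ^ 2) (gaussianReal 0 1) (t * b / 2) * exp (-(t / 2 * c)) := by
        rw [mgf, mgf, ← integral_mul_const]
        congr 1 with x
        rw [← exp_add]
        ring_nf
    _ = (√(1 - t * b))⁻¹ * exp (-(t / 2 * c)) := by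
        rw [hsq]; push_cast; ring_nf

theorem integrable_exp_mul_half_mul_sq_sub_gaussianReal {b c t : ℝ} (ht : t * b < 1) :
    Integrable (fun x => exp (t * (1 / 2 * (b * x ^ 2 - c)))) (gaussianReal 0 1) := by
  rw [← mgf_pos_iff, mgf_half_mul_sq_sub_gaussianReal ht]
  have : 0 < 1 - t * b := by linarith
  positivity

theorem neg_log_one_sub_le_add_sq {u : ℝ} (hu : |u| ≤ 1 / 2) : -log (1 - u) ≤ u + u ^ 2 := by
  have hlog : Complex.log (1 + -(u : ℂ)) = (log (1 - u) : ℂ) := by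
    rw [Complex.ofReal_log (by linarith [le_abs_self u])]
    push_cast; ring_nf
  have h := Complex.norm_log_one_add_sub_self_le (z := -(u : ℂ)) (by simp; linarith)
  rw [hlog, ← Complex.ofReal_neg, ← Complex.ofReal_sub, Complex.norm_real, Complex.norm_real,
    Real.norm_eq_abs, Real.norm_eq_abs, abs_neg, sub_neg_eq_add, sq_abs] at h
  have hinv : (1 - |u|)⁻¹ ≤ 2 := inv_le_of_inv_le₀ (by norm_num) (by linarith)
  nlinarith [neg_abs_le (log (1 - u) + u), sq_nonneg u]

theorem mgf_half_mul_sq_sub_gaussianReal_le {b c t : ℝ} (ht : |t * b| ≤ 1 / 2) :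
    mgf (fun x => 1 / 2 * (b * x ^ 2 - c)) (gaussianReal 0 1) t
      ≤ exp (t / 2 * (b - c) + t ^ 2 / 2 * b ^ 2) := by
  have h1 : 0 < 1 - t * b := by linarith [le_abs_self (t * b)]
  have hsqrt : (√(1 - t * b))⁻¹ = exp (-log (1 - t * b) / 2) := by
    rw [sqrt_eq_rpow, ← rpow_neg h1.le, rpow_def_of_pos h1]
    ring_nf
  rw [mgf_half_mul_sq_sub_gaussianReal (by linarith [le_abs_self (t * b)]), hsqrt, ← exp_add]
  refine exp_le_exp.mpr ?_
  nlinarith [neg_log_one_sub_le_add_sq ht]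

section Product

variable {ι : Type*} [Fintype ι] {Ω : ι → Type*} [∀ i, MeasurableSpace (Ω i)]
  {μ : ∀ i, Measure (Ω i)} (X : ∀ i, Ω i → ℝ) {t : ℝ}

theorem mgf_sum_pi [∀ i, SigmaFinite (μ i)] :
    mgf (fun ω => ∑ i, X i (ω i)) (Measure.pi μ) t = ∏ i, mgf (X i) (μ i) t := by
  simp only [mgf, mul_sum, exp_sum]
  exact integral_fintype_prod_eq_prod (μ := μ) fun i x => exp (t * X i x)

theorem integrable_exp_mul_sum_pi [∀ i, SigmaFinite (μ i)]
    (hX : ∀ i, Integrable (fun x => exp (t * X i x)) (μ i)) :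
    Integrable (fun ω => exp (t * ∑ i, X i (ω i))) (Measure.pi μ) := by
  simpa only [mul_sum, exp_sum] using Integrable.fintype_prod_dep hX

theorem measure_pi_lt_sum_le_exp_mul_prod_mgf [∀ i, IsProbabilityMeasure (μ i)] (ε : ℝ)
    (ht : 0 ≤ t) (hX : ∀ i, Integrable (fun x => exp (t * X i x)) (μ i)) :
    Measure.pi μ {ω | ε < ∑ i, X i (ω i)}
      ≤ ENNReal.ofReal (exp (-t * ε) * ∏ i, mgf (X i) (μ i) t) := by
  rw [← mgf_sum_pi, ENNReal.le_ofReal_iff_toReal_le (measure_ne_top _ _)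
    (mul_nonneg (exp_pos _).le mgf_nonneg)]
  calc (Measure.pi μ {ω | ε < ∑ i, X i (ω i)}).toReal
      ≤ (Measure.pi μ).real {ω | ε ≤ ∑ i, X i (ω i)} :=
        measureReal_mono fun ω (hω : ε < _) => hω.le
    _ ≤ _ := measure_ge_le_exp_mul_mgf ε ht (integrable_exp_mul_sum_pi X hX)

end Product

theorem sum_sub_one_sub_log_le {ι : Type*} (s : Finset ι) {a : ι → ℝ} {D : ℝ}
    (ha : ∀ i ∈ s, 0 < a i) (h₁ : ∑ i ∈ s, (a i - 1) ^ 2 ≤ D ^ 2)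
    (h₂ : ∑ i ∈ s, (1 - 1 / a i) ^ 2 ≤ D ^ 2) :
    ∑ i ∈ s, (a i - 1 - log (a i)) ≤ D ^ 2 := by
  have hterm : ∀ i ∈ s, a i - 1 - log (a i) ≤ (a i - 1) * (1 - 1 / a i) := fun i hi => by
    have hlog := one_sub_inv_le_log_of_pos (ha i hi)
    have hprod : (a i - 1) * (1 - 1 / a i) = a i - 1 - (1 - (a i)⁻¹) := by
      field_simp [(ha i hi).ne']
    linarith
  calc ∑ i ∈ s, (a i - 1 - log (a i))
      ≤ ∑ i ∈ s, (a i - 1) * (1 - 1 / a i) := sum_le_sum hterm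
    _ ≤ √(∑ i ∈ s, (a i - 1) ^ 2) * √(∑ i ∈ s, (1 - 1 / a i) ^ 2) :=
        sum_mul_le_sqrt_mul_sqrt _ _ _
    _ ≤ √(D ^ 2) * √(D ^ 2) := by gcongr
    _ = D ^ 2 := mul_self_sqrt (sq_nonneg D)

theorem abs_le_of_sum_sq_le {ι : Type*} [Fintype ι] {f : ι → ℝ} {D : ℝ}
    (h : ∑ j, f j ^ 2 ≤ D ^ 2) (hD : 0 ≤ D) (j : ι) : |f j| ≤ D :=
  abs_le_of_sq_le_sq ((single_le_sum (fun j _ => sq_nonneg (f j)) (mem_univ j)).trans h) hD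

theorem prod_mgf_half_mul_sq_sub_log_gaussianReal_le {κ ι : Type*} [Fintype κ] [Fintype ι]
    {a : ι → ℝ} {t D : ℝ} (ha : ∀ j, 0 < a j) (ht : 0 ≤ t)
    (hta : ∀ j, |t * (a j - 1)| ≤ 1 / 2)
    (h₁ : ∑ j, (a j - 1) ^ 2 ≤ D ^ 2) (h₂ : ∑ j, (1 - 1 / a j) ^ 2 ≤ D ^ 2) :
    ∏ p : κ × ι,
        mgf (fun x => 1 / 2 * ((a p.2 - 1) * x ^ 2 - log (a p.2))) (gaussianReal 0 1) t
      ≤ exp (Fintype.card κ * (t / 2 * D ^ 2 + t ^ 2 / 2 * D ^ 2)) :=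
  calc ∏ p : κ × ι,
        mgf (fun x => 1 / 2 * ((a p.2 - 1) * x ^ 2 - log (a p.2))) (gaussianReal 0 1) t
      ≤ ∏ p : κ × ι, exp (t / 2 * (a p.2 - 1 - log (a p.2)) + t ^ 2 / 2 * (a p.2 - 1) ^ 2) :=
        prod_le_prod (fun _ _ => mgf_nonneg)
          fun p _ => mgf_half_mul_sq_sub_gaussianReal_le (hta p.2)
    _ = exp (Fintype.card κ * (t / 2 * ∑ j, (a j - 1 - log (a j))
          + t ^ 2 / 2 * ∑ j, (a j - 1) ^ 2)) := by
        simp only [← exp_sum, Fintype.sum_prod_type, sum_const, card_univ, nsmul_eq_mul,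
          sum_add_distrib, ← mul_sum]
        ring_nf
    _ ≤ exp (Fintype.card κ * (t / 2 * D ^ 2 + t ^ 2 / 2 * D ^ 2)) := by
        gcongr
        exact sum_sub_one_sub_log_le _ (fun j _ => ha j) h₁ h₂

theorem sq_mul_le_sq_of_le_div_sqrt {a b c : ℝ} (ha : 0 ≤ a) (hb : 0 ≤ b) (h : a ≤ c / √b) :
    a ^ 2 * b ≤ c ^ 2 := by
  have hsq := pow_le_pow_left₀ ha h 2
  rw [div_pow, sq_sqrt hb] at hsq
  exact mul_le_of_le_div₀ (sq_nonneg c) hb hsq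

theorem chernoff_exponent_le {k ε L D : ℝ} (hε : 0 < ε) (hL : 0 ≤ L) (hk : k * D ^ 2 ≤ ε)
    (hkL : D ^ 2 * (8 * k * L) ≤ ε ^ 2) :
    -(4 * L / ε) * ε + k * (4 * L / ε / 2 * D ^ 2 + (4 * L / ε) ^ 2 / 2 * D ^ 2) ≤ -L := by
  set t := 4 * L / ε with ht_def
  have htε : t * ε = 4 * L := by rw [ht_def]; field_simp
  have hquad : k * D ^ 2 * t ^ 2 * ε ^ 2 ≤ 2 * L * ε ^ 2 :=
    calc k * D ^ 2 * t ^ 2 * ε ^ 2 = k * D ^ 2 * (t * ε) ^ 2 := by ring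
      _ = 2 * L * (D ^ 2 * (8 * k * L)) := by rw [htε]; ring
      _ ≤ 2 * L * ε ^ 2 := by gcongr
  nlinarith [le_of_mul_le_mul_right hquad (by positivity : (0 : ℝ) < ε ^ 2)]

theorem privacy_loss_tail_bound_general (k n : ℕ)
    (ε δ : ℝ) (hε : ε ∈ Set.Ioo (0 : ℝ) 1) (hδ : δ ∈ Set.Ioo (0 : ℝ) 1)
    (Δ : ℝ)
    (hΔdef : Δ = min (ε / Real.sqrt (8 * k * Real.log (1 / δ)))
                     (ε / (8 * Real.log (1 / δ))))
    (hkΔ : (k : ℝ) * Δ ^ 2 ≤ ε)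
    (lam : Fin n → ℝ) (hlampos : ∀ j, 0 < lam j)
    (h1 : ∑ j, (lam j - 1) ^ 2 ≤ Δ ^ 2)
    (h2 : ∑ j, (1 - 1 / lam j) ^ 2 ≤ Δ ^ 2) :
    Measure.pi (fun _ : Fin k × Fin n => gaussianReal 0 1)
      {ω | (1 / 2) * ∑ i, ∑ j, ((lam j - 1) * (ω (i, j)) ^ 2 - Real.log (lam j)) > ε}
      ≤ ENNReal.ofReal δ := by
  obtain ⟨hε, -⟩ := hε
  obtain ⟨hδ0, hδ1⟩ := hδ
  set L := log (1 / δ) with hL_def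
  have hL : 0 < L := log_pos (one_lt_one_div hδ0 hδ1)
  have hΔ : 0 ≤ Δ := hΔdef ▸ le_min (by positivity) (by positivity)
  have hΔL : Δ * (8 * L) ≤ ε :=
    mul_le_of_le_div₀ hε.le (by positivity) (hΔdef ▸ min_le_right _ _)
  have hkΔL : Δ ^ 2 * (8 * k * L) ≤ ε ^ 2 :=
    sq_mul_le_sq_of_le_div_sqrt hΔ (by positivity) (hΔdef ▸ min_le_left _ _)
  set t := 4 * L / ε with ht_def
  have ht : 0 ≤ t := by positivity
  have hcoord : ∀ j, |t * (lam j - 1)| ≤ 1 / 2 := fun j => by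
    rw [abs_mul, abs_of_nonneg ht]
    calc t * |lam j - 1| ≤ t * Δ := by gcongr; exact abs_le_of_sum_sq_le h1 hΔ j
      _ ≤ 1 / 2 := by rw [ht_def, div_mul_eq_mul_div, div_le_iff₀ hε]; linarith
  have hset : {ω : Fin k × Fin n → ℝ |
      (1 / 2) * ∑ i, ∑ j, ((lam j - 1) * (ω (i, j)) ^ 2 - log (lam j)) > ε}
      = {ω | ε < ∑ p : Fin k × Fin n, 1 / 2 * ((lam p.2 - 1) * ω p ^ 2 - log (lam p.2))} := by
    simp only [Fintype.sum_prod_type, mul_sum, gt_iff_lt]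
  rw [hset]
  refine (measure_pi_lt_sum_le_exp_mul_prod_mgf _ ε ht fun p =>
    integrable_exp_mul_half_mul_sq_sub_gaussianReal ?_).trans (ENNReal.ofReal_le_ofReal ?_)
  · linarith [le_abs_self (t * (lam p.2 - 1)), hcoord p.2]
  calc exp (-t * ε) * ∏ p : Fin k × Fin n,
        mgf (fun x => 1 / 2 * ((lam p.2 - 1) * x ^ 2 - log (lam p.2))) (gaussianReal 0 1) t
      ≤ exp (-t * ε) * exp (k * (t / 2 * Δ ^ 2 + t ^ 2 / 2 * Δ ^ 2)) := by
        gcongr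
        simpa using
          prod_mgf_half_mul_sq_sub_log_gaussianReal_le (κ := Fin k) hlampos ht hcoord h1 h2
    _ ≤ exp (-L) := by
        rw [← exp_add]
        exact exp_le_exp.mpr (chernoff_exponent_le hε hL.le hkΔ hkΔL)
    _ = δ := by rw [hL_def, one_div, log_inv, neg_neg, exp_log hδ0]

theorem privacy_loss_tail_bound (k n : ℕ) (hk : 1 ≤ k) (hn : 1 ≤ n)
    (ε δ : ℝ) (hε : ε ∈ Set.Ioo (0 : ℝ) 1) (hδ : δ ∈ Set.Ioo (0 : ℝ) 1)
    (Δ : ℝ)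
    (hΔdef : Δ = min (ε / Real.sqrt (8 * k * Real.log (1 / δ)))
                     (ε / (8 * Real.log (1 / δ))))
    (hΔ1 : Δ < 1) (hkΔ : (k : ℝ) * Δ ^ 2 ≤ ε)
    (lam : Fin n → ℝ) (hlampos : ∀ j, 0 < lam j)
    (h1 : ∑ j, (lam j - 1) ^ 2 ≤ Δ ^ 2)
    (h2 : ∑ j, (1 - 1 / lam j) ^ 2 ≤ Δ ^ 2) :
    Measure.pi (fun _ : Fin k × Fin n => gaussianReal 0 1)
      {ω | (1 / 2) * ∑ i, ∑ j, ((lam j - 1) * (ω (i, j)) ^ 2 - Real.log (lam j)) > ε}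
      ≤ ENNReal.ofReal δ :=
  privacy_loss_tail_bound_general k n ε δ hε hδ Δ hΔdef hkΔ lam hlampos h1 h2
end

section
/- Let η > 0, α > 0, β ≥ 0, and let X, X̃ ∈ ℝ^{n×d} satisfy: (i) X Xᵀ ⪰ η · I_n; (ii) every column of X and every column of X̃ has Euclidean norm at most α; (iii) there exists exactly one index i ∈ [d] with ‖X_{*,i} - X̃_{*,i}‖₂ ≤ β, and X_{*,j} = X̃_{*,j} for all j ∈ [d] \ {i}. Then (1 - 2αβ/η) X Xᵀ ⪯ X̃ X̃ᵀ ⪯ (1 + 2αβ/η) X Xᵀ in the Loewner order. -/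
/-!
The quadratic form `q_A(z) = zᵀ A Aᵀ z = ∑ⱼ (z ⬝ A_{*,j})²` of neighbouring `X`, `X̃` changes only
in the `i`-th term, and by Cauchy–Schwarz
`|(z ⬝ x̃)² - (z ⬝ x)²| = |z ⬝ (x̃ - x)| |z ⬝ (x̃ + x)| ≤ 2αβ‖z‖²`.
Goodness gives `η‖z‖² ≤ q_X(z)`, hence `|q_X̃(z) - q_X(z)| ≤ (2αβ/η) q_X(z)`, which is the
two-sided Loewner bound.
-/

open Matrix

/-- The Euclidean (ℓ₂) norm of a vector. -/
noncomputable def l2Norm {n : ℕ} (u : Fin n → ℝ) : ℝ :=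
  Real.sqrt (∑ i, (u i) ^ 2)

lemma l2Norm_nonneg {n : ℕ} (u : Fin n → ℝ) : 0 ≤ l2Norm u :=
  Real.sqrt_nonneg _

lemma l2Norm_sq {n : ℕ} (u : Fin n → ℝ) : l2Norm u ^ 2 = u ⬝ᵥ u := by
  rw [l2Norm, Real.sq_sqrt (by positivity)]
  simp only [dotProduct, sq]

lemma abs_dotProduct_le_l2Norm_mul {n : ℕ} (u v : Fin n → ℝ) :
    |u ⬝ᵥ v| ≤ l2Norm u * l2Norm v := by
  rw [l2Norm, l2Norm, ← Real.sqrt_mul (by positivity)]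
  exact Real.abs_le_sqrt (Finset.sum_mul_sq_le_sq_mul_sq _ u v)

lemma abs_sq_sub_sq_le {R : Type*} [CommRing R] [LinearOrder R] [IsStrictOrderedRing R]
    {s t a b : R} (hs : |s| ≤ a) (ht : |t| ≤ a) (hst : |t - s| ≤ b) :
    |t ^ 2 - s ^ 2| ≤ 2 * a * b := by
  rw [sq_sub_sq, abs_mul]
  calc |t + s| * |t - s| ≤ (a + a) * b :=
        mul_le_mul ((abs_add_le t s).trans (add_le_add ht hs)) hst (abs_nonneg _)
          (by linarith [abs_nonneg t])
    _ = 2 * a * b := by ring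

section Gram

variable {m k R : Type*} [Fintype m] [Fintype k] [CommRing R]

lemma dotProduct_mul_transpose_self_mulVec (A : Matrix m k R) (z : m → R) :
    z ⬝ᵥ (A * Aᵀ) *ᵥ z = ∑ j, (z ⬝ᵥ Aᵀ j) ^ 2 := by
  rw [← mulVec_mulVec, dotProduct_mulVec, ← mulVec_transpose]
  exact Finset.sum_congr rfl fun j _ => by rw [sq, mulVec, dotProduct_comm]

lemma dotProduct_gram_sub_of_columns_eq {A B : Matrix m k R} (i : k)
    (hcol : ∀ j, j ≠ i → ∀ r, A r j = B r j) (z : m → R) :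
    z ⬝ᵥ (B * Bᵀ) *ᵥ z - z ⬝ᵥ (A * Aᵀ) *ᵥ z = (z ⬝ᵥ Bᵀ i) ^ 2 - (z ⬝ᵥ Aᵀ i) ^ 2 := by
  rw [dotProduct_mul_transpose_self_mulVec, dotProduct_mul_transpose_self_mulVec,
    ← Finset.sum_sub_distrib]
  refine Finset.sum_eq_single i (fun j _ hj => ?_) (by simp)
  have hAB : Aᵀ j = Bᵀ j := funext (hcol j hj)
  rw [hAB, sub_self]

end Gram

lemma abs_dotProduct_gram_sub_le {n : ℕ} {k : Type*} [Fintype k]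
    {A B : Matrix (Fin n) k ℝ} {α β : ℝ} (i : k) (hA : l2Norm (Aᵀ i) ≤ α) (hB : l2Norm (Bᵀ i) ≤ α)
    (hAB : l2Norm (Aᵀ i - Bᵀ i) ≤ β) (hcol : ∀ j, j ≠ i → ∀ r, A r j = B r j)
    (z : Fin n → ℝ) :
    |z ⬝ᵥ (B * Bᵀ) *ᵥ z - z ⬝ᵥ (A * Aᵀ) *ᵥ z| ≤ 2 * α * β * l2Norm z ^ 2 := by
  rw [dotProduct_gram_sub_of_columns_eq i hcol]
  have hz := l2Norm_nonneg z
  have hs : |z ⬝ᵥ Aᵀ i| ≤ α * l2Norm z := by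
    rw [mul_comm]; exact (abs_dotProduct_le_l2Norm_mul _ _).trans (by gcongr)
  have ht : |z ⬝ᵥ Bᵀ i| ≤ α * l2Norm z := by
    rw [mul_comm]; exact (abs_dotProduct_le_l2Norm_mul _ _).trans (by gcongr)
  have hst : |z ⬝ᵥ Bᵀ i - z ⬝ᵥ Aᵀ i| ≤ β * l2Norm z := by
    rw [← dotProduct_sub, ← abs_neg, ← dotProduct_neg, neg_sub, mul_comm]
    exact (abs_dotProduct_le_l2Norm_mul _ _).trans (by gcongr)
  calc _ ≤ 2 * (α * l2Norm z) * (β * l2Norm z) := abs_sq_sub_sq_le hs ht hst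
    _ = 2 * α * β * l2Norm z ^ 2 := by ring

lemma mul_dotProduct_self_le_of_posSemidef_sub_smul_one {m : Type*} [Fintype m]
    [DecidableEq m] {M : Matrix m m ℝ} {η : ℝ} (h : (M - η • (1 : Matrix m m ℝ)).PosSemidef)
    (z : m → ℝ) :
    η * (z ⬝ᵥ z) ≤ z ⬝ᵥ M *ᵥ z := by
  have hq := h.dotProduct_mulVec_nonneg z
  rw [star_trivial, sub_mulVec, dotProduct_sub, smul_mulVec, one_mulVec, dotProduct_smul,
    smul_eq_mul] at hq
  linarith

lemma posSemidef_sub_smul_of_abs_dotProduct_sub_le {m : Type*} [Fintype m]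
    {M N : Matrix m m ℝ} (hM : M.IsHermitian) (hN : N.IsHermitian) {ε : ℝ}
    (h : ∀ z, |z ⬝ᵥ N *ᵥ z - z ⬝ᵥ M *ᵥ z| ≤ ε * (z ⬝ᵥ M *ᵥ z)) :
    (N - (1 - ε) • M).PosSemidef ∧ ((1 + ε) • M - N).PosSemidef := by
  constructor
  · refine .of_dotProduct_mulVec_nonneg (hN.sub (hM.smul (.all _))) fun z => ?_
    simp only [star_trivial, sub_mulVec, dotProduct_sub, smul_mulVec, dotProduct_smul, smul_eq_mul]
    linarith [(abs_le.mp (h z)).1]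
  · refine .of_dotProduct_mulVec_nonneg ((hM.smul (.all _)).sub hN) fun z => ?_
    simp only [star_trivial, sub_mulVec, dotProduct_sub, smul_mulVec, dotProduct_smul, smul_eq_mul]
    linarith [(abs_le.mp (h z)).2]

lemma isHermitian_mul_transpose_self {m k : Type*} [Fintype k] (A : Matrix m k ℝ) :
    (A * Aᵀ).IsHermitian := by
  simpa only [conjTranspose_eq_transpose_of_trivial] using isHermitian_mul_conjTranspose_self A

theorem sensitivity_of_gram_matrix_general {n d : ℕ} (η α β : ℝ)
    (hη : 0 < η)
    (X Xt : Matrix (Fin n) (Fin d) ℝ)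
    (hgood : (X * Xᵀ - η • (1 : Matrix (Fin n) (Fin n) ℝ)).PosSemidef)
    (hcolX : ∀ i : Fin d, l2Norm (fun r => X r i) ≤ α)
    (hcolXt : ∀ i : Fin d, l2Norm (fun r => Xt r i) ≤ α)
    (hneighbor : ∃ i : Fin d,
      l2Norm (fun r => X r i - Xt r i) ≤ β ∧
      ∀ j, j ≠ i → ∀ r, X r j = Xt r j) :
    (Xt * Xtᵀ - (1 - 2 * α * β / η) • (X * Xᵀ)).PosSemidef ∧
    ((1 + 2 * α * β / η) • (X * Xᵀ) - Xt * Xtᵀ).PosSemidef := by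
  obtain ⟨i, hdist, hcol⟩ := hneighbor
  have hα : 0 ≤ α := (l2Norm_nonneg _).trans (hcolX i)
  have hβ : 0 ≤ β := (l2Norm_nonneg _).trans hdist
  refine posSemidef_sub_smul_of_abs_dotProduct_sub_le (isHermitian_mul_transpose_self X)
    (isHermitian_mul_transpose_self Xt) fun z => ?_
  calc _ ≤ 2 * α * β * l2Norm z ^ 2 :=
        abs_dotProduct_gram_sub_le i (hcolX i) (hcolXt i) hdist hcol z
    _ = 2 * α * β / η * (η * (z ⬝ᵥ z)) := by rw [l2Norm_sq]; field_simp
    _ ≤ 2 * α * β / η * (z ⬝ᵥ (X * Xᵀ) *ᵥ z) := by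
        gcongr
        exact mul_dotProduct_self_le_of_posSemidef_sub_smul_one hgood z

theorem sensitivity_of_gram_matrix {n d : ℕ} (η α β : ℝ)
    (hη : 0 < η) (hα : 0 < α) (hβ : 0 ≤ β)
    (X Xt : Matrix (Fin n) (Fin d) ℝ)
    (hgood : (X * Xᵀ - η • (1 : Matrix (Fin n) (Fin n) ℝ)).PosSemidef)
    (hcolX : ∀ i : Fin d, l2Norm (fun r => X r i) ≤ α)
    (hcolXt : ∀ i : Fin d, l2Norm (fun r => Xt r i) ≤ α)
    (hneighbor : ∃ i : Fin d,
      l2Norm (fun r => X r i - Xt r i) ≤ β ∧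
      ∀ j, j ≠ i → ∀ r, X r j = Xt r j) :
    (Xt * Xtᵀ - (1 - 2 * α * β / η) • (X * Xᵀ)).PosSemidef ∧
    ((1 + 2 * α * β / η) • (X * Xᵀ) - Xt * Xtᵀ).PosSemidef :=
  sensitivity_of_gram_matrix_general η α β hη X Xt hgood hcolX hcolXt hneighbor
end

section
/- Let ε ∈ (0, 0.1), r ∈ (0, 0.1), and ρ ∈ (0, 0.1·ε]. Let f : ℝ → ℝ be either f(z) = exp(z) or f(z) = cosh(z). Let A, B ∈ ℝ^{n×n} be symmetric positive semidefinite matrices such that ‖A‖_∞ ≤ r (every entry of A has absolute value at most r) and (1-ρ) A ⪯ B ⪯ (1+ρ) A in the Loewner order. Then ‖D(A)^{-1} f(A) - D(B)^{-1} f(B)‖_∞ ≤ 4 · (1 + ε + 2r) · r, where D(M) := diag(f(M)·1_n) and ‖M‖_∞ is the maximum absolute value of the entries of M. -/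
open Matrix

/-! The Loewner sandwich controls the entries of `B` by those of `A`: off-diagonal entries of a
positive semidefinite matrix are bounded by its diagonal, so `|B i j| ≤ s := (1 + ρ) r`.
Hence all entries of `f(A)` and `f(B)` lie in `[e^{-s}, e^{s}]`, every entry of either
row-normalized matrix lies in `[e^{-2s}/n, e^{2s}/n]`, and two such entries differ by at most
`e^{2s} - e^{-2s} ≤ 4s + 8s²`. -/

open Finset Real Set

theorem Matrix.PosSemidef.abs_apply_le_half_add {ι : Type*} [Fintype ι] {M : Matrix ι ι ℝ}
    (hM : M.PosSemidef) (i j : ι) : |M i j| ≤ (M i i + M j j) / 2 := by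
  classical
  have hsym : M j i = M i j := hM.1.apply i j
  have quad (c : ℝ) : 0 ≤ M i i + 2 * c * M i j + c ^ 2 * M j j := by
    have := hM.dotProduct_mulVec_nonneg (Pi.single i 1 + Pi.single j c)
    simp only [star_trivial, mulVec_add, mulVec_single, MulOpposite.op_one, one_smul,
      op_smul_eq_smul, dotProduct_add, add_dotProduct, single_dotProduct, col_apply, one_mul,
      dotProduct_smul, smul_eq_mul] at this
    linear_combination this + c * hsym
  rw [abs_le]
  constructor <;> linarith [quad 1, quad (-1)]

theorem abs_apply_le_of_loewner_sandwich {ι : Type*} [Fintype ι] {A B : Matrix ι ι ℝ}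
    {r ρ : ℝ} (hρ₀ : 0 ≤ ρ) (hρ₁ : ρ ≤ 1) (hA : ∀ i j, |A i j| ≤ r)
    (hlow : (B - (1 - ρ) • A).PosSemidef) (hupp : ((1 + ρ) • A - B).PosSemidef) (i j : ι) :
    |B i j| ≤ (1 + ρ) * r := by
  set C := B - (1 - ρ) • A
  have hC_diag (k : ι) : C k k ≤ 2 * ρ * r := by
    have hBk : B k k ≤ (1 + ρ) * A k k := by simpa using hupp.diag_nonneg (i := k)
    have hAk : A k k ≤ r := (le_abs_self _).trans (hA k k)
    simp only [C, Matrix.sub_apply, Matrix.smul_apply, smul_eq_mul]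
    nlinarith
  calc |B i j| = |C i j + (1 - ρ) * A i j| := by simp [C]
    _ ≤ |C i j| + (1 - ρ) * |A i j| := by
        rw [← abs_of_nonneg (sub_nonneg.mpr hρ₁), ← abs_mul, abs_of_nonneg (sub_nonneg.mpr hρ₁)]
        exact abs_add_le _ _
    _ ≤ 2 * ρ * r + (1 - ρ) * r := by
        gcongr
        · linarith [hlow.abs_apply_le_half_add i j, hC_diag i, hC_diag j]
        · exact hA i j
    _ = (1 + ρ) * r := by ring

theorem abs_apply_le_entryInfNorm {n : ℕ} (M : Matrix (Fin n) (Fin n) ℝ) (i j : Fin n) :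
    |M i j| ≤ entryInfNorm M :=
  (Finite.le_ciSup (fun j => |M i j|) j).trans (Finite.le_ciSup (fun i => ⨆ j, |M i j|) i)

theorem entryInfNorm_le {n : ℕ} {M : Matrix (Fin n) (Fin n) ℝ} {c : ℝ} (hc : 0 ≤ c)
    (h : ∀ i j, |M i j| ≤ c) : entryInfNorm M ≤ c :=
  Real.iSup_le (fun i => Real.iSup_le (h i) hc) hc

theorem attnDiag_inv_mul_map_apply {n : ℕ} {f : ℝ → ℝ} {M : Matrix (Fin n) (Fin n) ℝ}
    (hf : ∀ i j, 0 < f (M i j)) (i j : Fin n) :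
    ((attnDiag f M)⁻¹ * M.map f) i j = f (M i j) / ∑ l, f (M i l) := by
  have hsum (k : Fin n) : ∑ l, f (M k l) ≠ 0 :=
    (Finset.sum_pos (fun l _ => hf k l) ⟨k, Finset.mem_univ k⟩).ne'
  have hinv : (attnDiag f M)⁻¹ = diagonal fun k => (∑ l, f (M k l))⁻¹ :=
    inv_eq_left_inv (by rw [attnDiag, diagonal_mul_diagonal]; simp [hsum])
  rw [hinv, diagonal_mul, map_apply, inv_mul_eq_div]

theorem div_sum_mem_Icc {ι : Type*} [Fintype ι] {g : ι → ℝ} {a b : ℝ} (ha : 0 < a)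
    (hg : ∀ l, g l ∈ Icc a b) (j : ι) :
    g j / ∑ l, g l ∈ Icc (a / (Fintype.card ι * b)) (b / (Fintype.card ι * a)) := by
  have hcard : (0 : ℝ) < Fintype.card ι := Nat.cast_pos.mpr (Fintype.card_pos_iff.mpr ⟨j⟩)
  have hsum_ge : Fintype.card ι * a ≤ ∑ l, g l := by
    simpa using Finset.card_nsmul_le_sum univ g a fun l _ => (hg l).1
  have hsum_le : ∑ l, g l ≤ Fintype.card ι * b := by
    simpa using Finset.sum_le_card_nsmul univ g b fun l _ => (hg l).2
  have hsum_pos : 0 < ∑ l, g l := (mul_pos hcard ha).trans_le hsum_ge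
  exact ⟨div_le_div₀ (ha.le.trans (hg j).1) (hg j).1 hsum_pos hsum_le,
    div_le_div₀ (ha.le.trans ((hg j).1.trans (hg j).2)) (hg j).2 (mul_pos hcard ha) hsum_ge⟩

theorem abs_div_sum_sub_div_sum_le {ι : Type*} [Fintype ι] {g h : ι → ℝ} {a b : ℝ}
    (ha : 0 < a) (hg : ∀ l, g l ∈ Icc a b) (hh : ∀ l, h l ∈ Icc a b) (j k : ι) :
    |g j / ∑ l, g l - h k / ∑ l, h l| ≤ b / a - a / b := by
  have hcard : (1 : ℝ) ≤ Fintype.card ι := Nat.one_le_cast.mpr (Fintype.card_pos_iff.mpr ⟨j⟩)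
  have hb : 0 < b := ha.trans_le ((hg j).1.trans (hg j).2)
  have hgap : 0 ≤ b / a - a / b :=
    sub_nonneg.mpr (div_le_div₀ hb.le ((hg j).1.trans (hg j).2) ha ((hg j).1.trans (hg j).2))
  obtain ⟨hg₁, hg₂⟩ := div_sum_mem_Icc ha hg j
  obtain ⟨hh₁, hh₂⟩ := div_sum_mem_Icc ha hh k
  calc |g j / ∑ l, g l - h k / ∑ l, h l|
      ≤ b / (Fintype.card ι * a) - a / (Fintype.card ι * b) :=
        abs_sub_le_of_le_of_le hg₁ hg₂ hh₁ hh₂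
    _ = (b / a - a / b) / Fintype.card ι := by field_simp
    _ ≤ b / a - a / b := div_le_self hgap hcard

theorem entryInfNorm_attn_sub_le {n : ℕ} {f : ℝ → ℝ} {M N : Matrix (Fin n) (Fin n) ℝ}
    {a b : ℝ} (ha : 0 < a) (hab : a ≤ b) (hM : ∀ i j, f (M i j) ∈ Icc a b)
    (hN : ∀ i j, f (N i j) ∈ Icc a b) :
    entryInfNorm ((attnDiag f M)⁻¹ * M.map f - (attnDiag f N)⁻¹ * N.map f) ≤ b / a - a / b := by
  refine entryInfNorm_le (sub_nonneg.mpr (div_le_div₀ (ha.le.trans hab) hab ha hab)) fun i j => ?_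
  rw [Matrix.sub_apply, attnDiag_inv_mul_map_apply (fun i j => ha.trans_le (hM i j).1),
    attnDiag_inv_mul_map_apply (fun i j => ha.trans_le (hN i j).1)]
  exact abs_div_sum_sub_div_sum_le ha (hM i) (hN i) j j

theorem exp_or_cosh_mem_Icc {f : ℝ → ℝ} (hf : f = exp ∨ f = cosh) {x s : ℝ} (hx : |x| ≤ s) :
    f x ∈ Icc (exp (-s)) (exp s) := by
  obtain ⟨hx₁, hx₂⟩ := abs_le.mp hx
  rcases hf with rfl | rfl
  · exact ⟨exp_le_exp.mpr hx₁, exp_le_exp.mpr hx₂⟩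
  · refine ⟨(exp_le_one_iff.mpr (by linarith)).trans (one_le_cosh x), ?_⟩
    rw [cosh_eq]
    linarith [exp_le_exp.mpr hx₂, exp_le_exp.mpr (neg_le.mp hx₁)]

theorem exp_sub_exp_neg_le {x : ℝ} (hx₀ : 0 ≤ x) (hx₁ : x ≤ 1 / 2) :
    exp x - exp (-x) ≤ 2 * x + 2 * x ^ 2 := by
  have hup := exp_bound_div_one_sub_of_interval hx₀ (by linarith)
  have hlow := one_sub_le_exp_neg x
  have key : 1 / (1 - x) ≤ 1 + x + 2 * x ^ 2 := by
    rw [div_le_iff₀ (by linarith)]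
    nlinarith
  linarith

theorem private_attention_accuracy_general {n : ℕ} (ε r ρ : ℝ)
    (hε : ε ∈ Set.Ioo (0 : ℝ) 0.1) (hr : r ∈ Set.Ioo (0 : ℝ) 0.1)
    (hρ : ρ ∈ Set.Ioc (0 : ℝ) (0.1 * ε))
    (f : ℝ → ℝ) (hf : f = Real.exp ∨ f = Real.cosh)
    (A B : Matrix (Fin n) (Fin n) ℝ)
    (hAr : entryInfNorm A ≤ r)
    (hlow : (B - (1 - ρ) • A).PosSemidef)
    (hupp : ((1 + ρ) • A - B).PosSemidef) :
    entryInfNorm ((attnDiag f A)⁻¹ * A.map f - (attnDiag f B)⁻¹ * B.map f) ≤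
      4 * (1 + ε + 2 * r) * r := by
  obtain ⟨hε₀, hε₁⟩ := hε
  obtain ⟨hr₀, hr₁⟩ := hr
  obtain ⟨hρ₀, hρ₁⟩ := hρ
  have hA (i j : Fin n) : |A i j| ≤ r := (abs_apply_le_entryInfNorm A i j).trans hAr
  have hB := abs_apply_le_of_loewner_sandwich hρ₀.le (by linarith) hA hlow hupp
  set s := (1 + ρ) * r
  have hrs : r ≤ s := by nlinarith
  calc _ ≤ exp s / exp (-s) - exp (-s) / exp s :=
        entryInfNorm_attn_sub_le (exp_pos _) (exp_le_exp.mpr (by linarith))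
          (fun i j => exp_or_cosh_mem_Icc hf ((hA i j).trans hrs))
          (fun i j => exp_or_cosh_mem_Icc hf (hB i j))
    _ = exp (2 * s) - exp (-(2 * s)) := by rw [← exp_sub, ← exp_sub]; ring_nf
    _ ≤ 2 * (2 * s) + 2 * (2 * s) ^ 2 := exp_sub_exp_neg_le (by linarith) (by nlinarith)
    _ ≤ 4 * (1 + ε + 2 * r) * r := by
        have hρr : ρ * r ≤ 0.1 * ε * r := mul_le_mul_of_nonneg_right hρ₁ hr₀.le
        nlinarith [mul_pos hρ₀ hr₀, mul_pos (mul_pos hρ₀ hr₀) hr₀]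

theorem private_attention_accuracy {n : ℕ} (ε r ρ : ℝ)
    (hε : ε ∈ Set.Ioo (0 : ℝ) 0.1) (hr : r ∈ Set.Ioo (0 : ℝ) 0.1)
    (hρ : ρ ∈ Set.Ioc (0 : ℝ) (0.1 * ε))
    (f : ℝ → ℝ) (hf : f = Real.exp ∨ f = Real.cosh)
    (A B : Matrix (Fin n) (Fin n) ℝ)
    (hA : A.PosSemidef) (hB : B.PosSemidef)
    (hAr : entryInfNorm A ≤ r)
    (hlow : (B - (1 - ρ) • A).PosSemidef)
    (hupp : ((1 + ρ) • A - B).PosSemidef) :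
    entryInfNorm ((attnDiag f A)⁻¹ * A.map f - (attnDiag f B)⁻¹ * B.map f) ≤
      4 * (1 + ε + 2 * r) * r :=
  private_attention_accuracy_general ε r ρ hε hr hρ f hf A B hAr hlow hupp
end
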